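/- Let n ≥ 1 and let 0 = W_0 < W_1 < ⋯ < W_n be real numbers, with a_i = W_i − W_{i−1}. Let B = [0,W_1] × ⋯ × [0,W_n] and for a permutation π of {1,…,n} let C_π = {x ∈ B : x_{π(1)} ≥ ⋯ ≥ x_{π(n)}}. For a sequence λ ∈ {1,…,n}^n, let G_λ be the stabilizer of λ under the coordinate-permuting action of S_n on {1,…,n}^n, and let λ^max(π)_i = min{π(1),…,π(i)}. Then Vol(C_π) = Σ_λ (1/|G_λ|) · a_{λ_1} a_{λ_2} ⋯ a_{λ_n}, where the sum is over all weakly decreasing sequences λ ∈ {1,…,n}^n with λ_i ≤ λ^max(π)_i for all i. -/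

import Mathlib

open MeasureTheory

/-- The box `[0, W₁] × ⋯ × [0, Wₙ]` (0-indexed: coordinate `i` ranges over `[0, W (i+1)]`). -/
def box (n : ℕ) (W : ℕ → ℝ) : Set (Fin n → ℝ) :=
  {x | ∀ i : Fin n, x i ∈ Set.Icc 0 (W ((i : ℕ) + 1))}

/-- The region `C_π = {x ∈ B : x_{π(1)} ≥ x_{π(2)} ≥ ⋯ ≥ x_{π(n)}}`. -/
def Cpi (n : ℕ) (W : ℕ → ℝ) (π : Equiv.Perm (Fin n)) : Set (Fin n → ℝ) :=
  {x ∈ box n W | ∀ i j : Fin n, i ≤ j → x (π j) ≤ x (π i)}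

/-- `λ^max(π)ᵢ = min{π(1), …, π(i)}` (1-indexed values, so `π j` contributes `(π j : ℕ) + 1`). -/
def lamMax (n : ℕ) (π : Equiv.Perm (Fin n)) (i : Fin n) : ℕ :=
  (Finset.Iic i).inf' ⟨i, Finset.mem_Iic.mpr le_rfl⟩ (fun j => (π j : ℕ) + 1)

/-- The stabilizer `G_ρ ≤ Sₙ` of `ρ` under the coordinate-permuting action
`(σ • ρ) i = ρ (σ⁻¹ i)` (equivalently, `τ` stabilizes `ρ` iff `ρ ∘ τ = ρ`). -/
def stab (n : ℕ) (ρ : Fin n → Fin n) : Subgroup (Equiv.Perm (Fin n)) where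
  carrier := {τ | ρ ∘ ⇑τ = ρ}
  one_mem' := rfl
  mul_mem' := by
    intro a b ha hb
    simp only [Set.mem_setOf_eq] at *
    show ρ ∘ (⇑a ∘ ⇑b) = ρ
    rw [← Function.comp_assoc, ha, hb]
  inv_mem' := by
    intro a ha
    simp only [Set.mem_setOf_eq] at *
    funext i
    have h := congrFun ha (a⁻¹ i)
    simpa using h.symm


/-!
Reordering the coordinates by `π` turns `C_π` into the antitone part of a box. Off a null set this
splits into cells: `y` lies in the cell of `λ` when each `y i` lies in `(W (λ i), W (λ i + 1)]`,
and the nonempty cells are exactly those of the `λ` in the sum. Sorting a point of the box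
`∏ i, (W (λ i), W (λ i + 1)]` into antitone order only permutes coordinates inside level sets of
`λ`, so this box is the union of the `|G_λ|` images of the cell under `G_λ`, which overlap only
where two coordinates coincide; hence the cell has volume `∏ i, a_{λ i} / |G_λ|`.
-/

open MeasureTheory Set Function

section Pi

variable {ι : Type*} [Fintype ι]

lemma measurePreserving_comp_perm (σ : Equiv.Perm ι) :
    MeasurePreserving (fun y : ι → ℝ => y ∘ σ) :=
  volume_preserving_arrowCongr' σ.symm (MeasurableEquiv.refl ℝ) (.id volume)

lemma volume_setOf_apply_eq_apply {i j : ι} (hij : i ≠ j) :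
    volume {y : ι → ℝ | y i = y j} = 0 := by
  classical
  let f : (ι → ℝ) →ₗ[ℝ] ℝ := (LinearMap.proj i : (ι → ℝ) →ₗ[ℝ] ℝ) - LinearMap.proj j
  have hf : f ≠ 0 := fun h => by
    simpa [f, Pi.single_eq_of_ne' hij] using LinearMap.congr_fun h (Pi.single i 1)
  have hset : {y : ι → ℝ | y i = y j} = (LinearMap.ker f : Set (ι → ℝ)) := by
    ext y
    simp [f, sub_eq_zero]
  rw [hset]
  exact Measure.addHaar_submodule _ _ (by rwa [ne_eq, LinearMap.ker_eq_top])

lemma volume_setOf_not_injective : volume {y : ι → ℝ | ¬ Injective y} = 0 := by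
  have hsub : {y : ι → ℝ | ¬ Injective y} ⊆ ⋃ (i : ι) (j : ι) (_ : i ≠ j), {y | y i = y j} := by
    intro y hy
    obtain ⟨i, j, hyij, hij⟩ := not_injective_iff.mp hy
    exact mem_iUnion₂.mpr ⟨i, j, mem_iUnion.mpr ⟨hij, hyij⟩⟩
  exact measure_mono_null hsub <| measure_iUnion_null fun i => measure_iUnion_null fun j =>
    measure_iUnion_null fun hij => volume_setOf_apply_eq_apply hij

lemma volume_setOf_exists_apply_eq_zero : volume {y : ι → ℝ | ∃ i, y i = 0} = 0 := by
  rw [ofPred_exists]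
  exact measure_iUnion_null fun i => by
    rw [volume_pi]
    exact Measure.pi_hyperplane _ i 0

end Pi

lemma preimage_comp_perm_univ_pi {ι κ : Type*} {lam : ι → κ} {σ : Equiv.Perm ι} (hσ : lam ∘ σ = lam)
    (t : κ → Set ℝ) :
    (fun y => y ∘ σ) ⁻¹' (univ.pi fun i => t (lam i)) = univ.pi fun i => t (lam i) := by
  have hσ' : ∀ i, lam (σ i) = lam i := congrFun hσ
  ext y
  simp only [mem_preimage, mem_univ_pi, comp_apply]
  refine ⟨fun h i => ?_, fun h i => hσ' i ▸ h (σ i)⟩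
  simpa [← hσ' (σ.symm i)] using h (σ.symm i)

section Sorting

variable {n : ℕ}

lemma exists_perm_antitone_comp {α : Type*} [LinearOrder α] (y : Fin n → α) :
    ∃ σ : Equiv.Perm (Fin n), Antitone (y ∘ σ) :=
  ⟨Tuple.sort (OrderDual.toDual ∘ y), Tuple.monotone_sort (OrderDual.toDual ∘ y)⟩

lemma perm_eq_of_antitone_comp {α : Type*} [PartialOrder α] {y : Fin n → α} (hy : Injective y)
    {σ τ : Equiv.Perm (Fin n)} (hσ : Antitone (y ∘ σ)) (hτ : Antitone (y ∘ τ)) : σ = τ :=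
  Equiv.ext fun i => hy (congrFun (Tuple.unique_antitone hσ hτ) i)

/-- Translates of a subset of the antitone cone by distinct permutations meet only where two
coordinates coincide, a null set. -/
lemma volume_iUnion_preimage_comp_perm (H : Subgroup (Equiv.Perm (Fin n)))
    {S : Set (Fin n → ℝ)} (hS : MeasurableSet S) (hS_anti : S ⊆ {y | Antitone y}) :
    volume (⋃ σ : H, (fun y => y ∘ ⇑(σ : Equiv.Perm (Fin n))) ⁻¹' S) = Nat.card H * volume S := by
  have hdisj : Pairwise (AEDisjoint volume on
      fun σ : H => (fun y => y ∘ ⇑(σ : Equiv.Perm (Fin n))) ⁻¹' S) := by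
    intro σ τ hστ
    refine measure_mono_null (fun y hy => show ¬ Injective y from fun hinj => hστ ?_)
      volume_setOf_not_injective
    exact Subtype.ext (perm_eq_of_antitone_comp hinj (hS_anti hy.1) (hS_anti hy.2))
  rw [measure_iUnion₀ hdisj fun σ =>
      ((measurePreserving_comp_perm _).measurable hS).nullMeasurableSet,
    tsum_congr fun σ => (measurePreserving_comp_perm _).measure_preimage hS.nullMeasurableSet,
    ENNReal.tsum_const, ENat.card_eq_coe_natCard, ENat.toENNReal_coe]

end Sorting

section Intervals

variable {κ : Type*} [LinearOrder κ] {c d : κ → ℝ}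

lemma lt_of_mem_Ioc_of_lt (hcd : ∀ k k', k < k' → d k ≤ c k') {k k' : κ} (h : k < k')
    {x x' : ℝ} (hx : x ∈ Ioc (c k) (d k)) (hx' : x' ∈ Ioc (c k') (d k')) : x < x' :=
  hx.2.trans_lt ((hcd k k' h).trans_lt hx'.1)

variable {ι : Type*}

lemma antitone_of_mem_pi_Ioc [Preorder ι] (hcd : ∀ k k', k < k' → d k ≤ c k') {lam : ι → κ}
    {y : ι → ℝ} (hy : y ∈ univ.pi fun i => Ioc (c (lam i)) (d (lam i))) (hanti : Antitone y) :
    Antitone lam := fun i j hij => not_lt.mp fun h =>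
  (lt_of_mem_Ioc_of_lt hcd h (hy i trivial) (hy j trivial)).not_ge (hanti hij)

lemma eq_of_mem_pi_Ioc (hcd : ∀ k k', k < k' → d k ≤ c k') {lam lam' : ι → κ} {y : ι → ℝ}
    (hy : y ∈ univ.pi fun i => Ioc (c (lam i)) (d (lam i)))
    (hy' : y ∈ univ.pi fun i => Ioc (c (lam' i)) (d (lam' i))) : lam = lam' := by
  funext i
  refine le_antisymm (not_lt.mp fun h => ?_) (not_lt.mp fun h => ?_)
  · exact (lt_of_mem_Ioc_of_lt hcd h (hy' i trivial) (hy i trivial)).false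
  · exact (lt_of_mem_Ioc_of_lt hcd h (hy i trivial) (hy' i trivial)).false

end Intervals

section Cells

variable {n : ℕ} {c d : Fin n → ℝ}

lemma mem_stab {ρ : Fin n → Fin n} {σ : Equiv.Perm (Fin n)} : σ ∈ stab n ρ ↔ ρ ∘ σ = ρ :=
  Iff.rfl

def sortedCell (c d : Fin n → ℝ) (lam : Fin n → Fin n) : Set (Fin n → ℝ) :=
  (univ.pi fun i => Ioc (c (lam i)) (d (lam i))) ∩ {y | Antitone y}

lemma measurableSet_sortedCell (lam : Fin n → Fin n) : MeasurableSet (sortedCell c d lam) :=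
  (MeasurableSet.univ_pi fun _ => measurableSet_Ioc).inter isClosed_antitone.measurableSet

/-- Sorting a point of the box into antitone order permutes coordinates only within the level sets
of `lam`, since the intervals are ordered and `lam` is antitone. -/
lemma univ_pi_Ioc_eq_iUnion_stab (hcd : ∀ k k', k < k' → d k ≤ c k') {lam : Fin n → Fin n}
    (hlam : Antitone lam) :
    (univ.pi fun i => Ioc (c (lam i)) (d (lam i))) =
      ⋃ σ : stab n lam, (fun y => y ∘ ⇑(σ : Equiv.Perm (Fin n))) ⁻¹' sortedCell c d lam := by
  refine Subset.antisymm (fun y hy => ?_) (iUnion_subset fun σ y hy => ?_)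
  · obtain ⟨σ, hσ⟩ := exists_perm_antitone_comp y
    have hyσ : y ∘ σ ∈ univ.pi fun i => Ioc (c ((lam ∘ σ) i)) (d ((lam ∘ σ) i)) :=
      fun i _ => hy (σ i) trivial
    have hlamσ : lam ∘ σ = lam :=
      Tuple.unique_antitone (f := lam) (τ := 1) (antitone_of_mem_pi_Ioc hcd hyσ hσ) hlam
    refine mem_iUnion.mpr ⟨⟨σ, mem_stab.mpr hlamσ⟩, ?_, hσ⟩
    rwa [← preimage_comp_perm_univ_pi hlamσ fun k => Ioc (c k) (d k)] at hy
  · rw [← preimage_comp_perm_univ_pi (mem_stab.mp σ.2) fun k => Ioc (c k) (d k)]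
    exact hy.1

lemma volume_sortedCell (hcd : ∀ k k', k < k' → d k ≤ c k') (hle : ∀ k, c k ≤ d k)
    {lam : Fin n → Fin n} (hlam : Antitone lam) :
    volume (sortedCell c d lam) =
      ENNReal.ofReal ((∏ i, (d (lam i) - c (lam i))) / Nat.card (stab n lam)) := by
  have hbox := Real.volume_pi_Ioc (a := fun i => c (lam i)) (b := fun i => d (lam i))
  rw [univ_pi_Ioc_eq_iUnion_stab hcd hlam, volume_iUnion_preimage_comp_perm _
    (measurableSet_sortedCell lam) inter_subset_right] at hbox
  have hcard : (Nat.card (stab n lam) : ENNReal) ≠ 0 := by simp [Nat.card_pos.ne']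
  rw [ENNReal.ofReal_div_of_pos (by simp [Nat.card_pos]), ENNReal.ofReal_prod_of_nonneg
    (fun i _ => sub_nonneg.mpr (hle _)), ← hbox, ENNReal.ofReal_natCast,
    mul_comm, ENNReal.mul_div_cancel_right hcard (ENNReal.natCast_ne_top _)]

lemma pairwise_disjoint_sortedCell (hcd : ∀ k k', k < k' → d k ≤ c k') :
    Pairwise (Disjoint on sortedCell c d) := fun _ _ hne =>
  disjoint_left.mpr fun _ hy hy' => hne (eq_of_mem_pi_Ioc hcd hy.1 hy'.1)

end Cells

section Cpi

variable {n : ℕ} {W : ℕ → ℝ}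

lemma Cpi_eq_preimage (π : Equiv.Perm (Fin n)) :
    Cpi n W π = (fun x => x ∘ π) ⁻¹'
      ((univ.pi fun i => Icc 0 (W ((π i : ℕ) + 1))) ∩ {y | Antitone y}) := by
  ext x
  simp only [Cpi, box, mem_ofPred_eq, mem_preimage, mem_inter_iff, mem_univ_pi, comp_apply]
  exact and_congr π.forall_congr_right.symm Iff.rfl

lemma lamMax_le (π : Equiv.Perm (Fin n)) (i : Fin n) : lamMax n π i ≤ (π i : ℕ) + 1 :=
  Finset.inf'_le _ (Finset.mem_Iic.mpr le_rfl)

lemma le_lamMax_iff {π : Equiv.Perm (Fin n)} {i : Fin n} {m : ℕ} :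
    m ≤ lamMax n π i ↔ ∀ j ≤ i, m ≤ (π j : ℕ) + 1 :=
  (Finset.le_inf'_iff _ _).trans <| by simp only [Finset.mem_Iic]

lemma exists_mem_Ioc_of_mem_Ioc {x : ℝ} : ∀ {m : ℕ}, x ∈ Ioc (W 0) (W m) →
    ∃ k < m, x ∈ Ioc (W k) (W (k + 1))
  | 0, hx => absurd (hx.1.trans_le hx.2) (lt_irrefl _)
  | m + 1, hx => by
    by_cases hxm : x ≤ W m
    · obtain ⟨k, hk, hxk⟩ := exists_mem_Ioc_of_mem_Ioc ⟨hx.1, hxm⟩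
      exact ⟨k, hk.trans (lt_add_one m), hxk⟩
    · exact ⟨m, lt_add_one m, not_le.mp hxm, hx.2⟩

lemma apply_add_one_le_apply_of_lt (hW : MonotoneOn W (Iic n)) {k k' : Fin n} (h : k < k') :
    W (k + 1) ≤ W k' :=
  hW (mem_Iic.mpr k.isLt) (mem_Iic.mpr k'.isLt.le) (Fin.lt_def.mp h)

/-- `lam i` records which interval `(W k, W (k + 1)]` contains `y i`. -/
lemma sortedBox_sdiff_eq_biUnion (hW0 : W 0 = 0) (hW : MonotoneOn W (Iic n))
    {π : Equiv.Perm (Fin n)} {s : Finset (Fin n → Fin n)}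
    (hs : ∀ lam, lam ∈ s ↔ Antitone lam ∧ ∀ i, (lam i : ℕ) + 1 ≤ lamMax n π i) :
    ((univ.pi fun i => Icc 0 (W ((π i : ℕ) + 1))) ∩ {y | Antitone y}) \ {y | ∃ i, y i = 0} =
      ⋃ lam ∈ s, sortedCell (fun k => W k) (fun k => W (k + 1)) lam := by
  have hcd : ∀ k k' : Fin n, k < k' → W (k + 1) ≤ W k' :=
    fun _ _ => apply_add_one_le_apply_of_lt hW
  ext y
  simp only [sortedCell, mem_sdiff, mem_inter_iff, mem_univ_pi, mem_ofPred_eq, not_exists,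
    mem_iUnion, hs, exists_prop]
  constructor
  · rintro ⟨⟨hbox, hanti⟩, hne⟩
    have hcell : ∀ i, ∃ k : Fin n, y i ∈ Ioc (W k) (W (k + 1)) := fun i => by
      obtain ⟨k, hk, hyk⟩ := exists_mem_Ioc_of_mem_Ioc
        ⟨hW0 ▸ (hbox i).1.lt_of_ne' (hne i), (hbox i).2⟩
      exact ⟨⟨k, by omega⟩, hyk⟩
    choose lam hlam using hcell
    refine ⟨lam, ⟨antitone_of_mem_pi_Ioc hcd (fun i _ => hlam i) hanti, fun i => ?_⟩, hlam, hanti⟩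
    refine le_lamMax_iff.mpr fun j hji => not_lt.mp fun h => ?_
    have hle : W ((π j : ℕ) + 1) ≤ W (lam i) :=
      hW (mem_Iic.mpr (π j).isLt) (mem_Iic.mpr (lam i).isLt.le) (by omega)
    exact ((hle.trans_lt (hlam i).1).trans_le ((hanti hji).trans (hbox j).2)).false
  · rintro ⟨lam, ⟨-, hmax⟩, hy, hanti⟩
    have hpos : ∀ i, 0 < y i := fun i => (hy i).1.trans_le' <|
      hW0 ▸ hW (mem_Iic.mpr (Nat.zero_le _)) (mem_Iic.mpr (lam i).isLt.le) (Nat.zero_le _)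
    refine ⟨⟨fun i => ⟨(hpos i).le, (hy i).2.trans (hW ?_ ?_ ((hmax i).trans (lamMax_le π i)))⟩,
      hanti⟩, fun i => (hpos i).ne'⟩
    · exact mem_Iic.mpr (lam i).isLt
    · exact mem_Iic.mpr (π i).isLt

end Cpi

open Classical in
theorem volume_Cpi_eq_sum_general (n : ℕ) (W : ℕ → ℝ) (hW0 : W 0 = 0)
    (hW : ∀ i, i < n → W i < W (i + 1))
    (π : Equiv.Perm (Fin n)) :
    volume (Cpi n W π) =
      ∑ lam ∈ Finset.univ.filter (fun lam : Fin n → Fin n =>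
          (∀ i j : Fin n, i ≤ j → lam j ≤ lam i) ∧
            ∀ i : Fin n, (lam i : ℕ) + 1 ≤ lamMax n π i),
        ENNReal.ofReal
          ((∏ i : Fin n, (W ((lam i : ℕ) + 1) - W ((lam i : ℕ)))) /
            (Nat.card (stab n lam) : ℝ)) := by
  have hWmono : MonotoneOn W (Iic n) :=
    (strictMonoOn_Iic_of_lt_succ fun m hm => by simpa using hW m hm).monotoneOn
  set s := Finset.univ.filter (fun lam : Fin n → Fin n =>
    (∀ i j : Fin n, i ≤ j → lam j ≤ lam i) ∧ ∀ i : Fin n, (lam i : ℕ) + 1 ≤ lamMax n π i)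
  have hs : ∀ lam, lam ∈ s ↔ Antitone lam ∧ ∀ i, (lam i : ℕ) + 1 ≤ lamMax n π i := fun lam => by
    simp only [s, Finset.mem_filter, Finset.mem_univ, true_and, Antitone]
  have hmeas : MeasurableSet ((univ.pi fun i => Icc 0 (W ((π i : ℕ) + 1))) ∩ {y | Antitone y}) :=
    (MeasurableSet.univ_pi fun _ => measurableSet_Icc).inter isClosed_antitone.measurableSet
  rw [Cpi_eq_preimage, (measurePreserving_comp_perm π).measure_preimage hmeas.nullMeasurableSet,
    ← measure_sdiff_null volume_setOf_exists_apply_eq_zero,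
    sortedBox_sdiff_eq_biUnion hW0 hWmono hs,
    measure_biUnion_finset
      ((pairwise_disjoint_sortedCell fun _ _ => apply_add_one_le_apply_of_lt hWmono).set_pairwise _)
      fun lam _ => measurableSet_sortedCell lam]
  refine Finset.sum_congr rfl fun lam hlam => ?_
  exact volume_sortedCell (fun _ _ => apply_add_one_le_apply_of_lt hWmono)
    (fun k => (hW k k.isLt).le) ((hs lam).mp hlam).1

open Classical in
theorem volume_Cpi_eq_sum (n : ℕ) (hn : 1 ≤ n) (W : ℕ → ℝ) (hW0 : W 0 = 0)
    (hW : ∀ i, i < n → W i < W (i + 1))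
    (π : Equiv.Perm (Fin n)) :
    volume (Cpi n W π) =
      ∑ lam ∈ Finset.univ.filter (fun lam : Fin n → Fin n =>
          (∀ i j : Fin n, i ≤ j → lam j ≤ lam i) ∧
            ∀ i : Fin n, (lam i : ℕ) + 1 ≤ lamMax n π i),
        ENNReal.ofReal
          ((∏ i : Fin n, (W ((lam i : ℕ) + 1) - W ((lam i : ℕ)))) /
            (Nat.card (stab n lam) : ℝ)) :=
  volume_Cpi_eq_sum_general n W hW0 hW π
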